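/- Let F' be a graph with a center vertex v* (a vertex adjacent to all other vertices of F'), let F = F' − v*, and let G be a graph with a center vertex w (adjacent to all other vertices of G). Then G is F'-saturated if and only if G − w is F-saturated. -/

import Mathlib

open SimpleGraph

/-- Graph `G` contains a copy of `H`, i.e. a subgraph isomorphic to `H`. -/
def Contains {α β : Type*} (G : SimpleGraph α) (H : SimpleGraph β) : Prop :=
  ∃ f : β ↪ α, ∀ a b, H.Adj a b → G.Adj (f a) (f b)

/-- `G` together with the extra edge `uv`. -/
def addE {α : Type*} (G : SimpleGraph α) (u v : α) : SimpleGraph α :=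
  G ⊔ SimpleGraph.fromEdgeSet {s(u, v)}

/-- `G` is `H`-saturated: `G` is `H`-free and adding any non-edge creates a copy of `H`. -/
def Saturated {α β : Type*} (G : SimpleGraph α) (H : SimpleGraph β) : Prop :=
  ¬ Contains G H ∧ ∀ u v : α, u ≠ v → ¬ G.Adj u v → Contains (addE G u v) H

/-- The join `K₁ ∨ F`: a new vertex (`none`) adjacent to every vertex of `F`. -/
def joinK1 {β : Type*} (F : SimpleGraph β) : SimpleGraph (Option β) where
  Adj x y :=
    match x, y with
    | some a, some b => F.Adj a b
    | some _, none => True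
    | none, some _ => True
    | none, none => False
  symm := by
    constructor
    rintro (_ | a) (_ | b) h
    · exact h.elim
    · trivial
    · trivial
    · exact h.symm
  loopless := by
    constructor
    rintro (_ | a) h
    · exact h.elim
    · exact F.loopless.irrefl a h

/-- The saturation number `sat(n, H)`: minimum number of edges of an `H`-saturated
graph on `n` vertices. -/
noncomputable def satNum {β : Type*} (n : ℕ) (H : SimpleGraph β) : ℕ :=
  sInf {e | ∃ G : SimpleGraph (Fin n), Saturated G H ∧ G.edgeSet.ncard = e}

/-- The triangle. -/
def K3 : SimpleGraph (Fin 3) := ⊤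

/-- `G` is `{K₃, Pₖ}`-saturated. -/
def SatKP {V : Type*} (G : SimpleGraph V) (k : ℕ) : Prop :=
  ¬ Contains G K3 ∧ ¬ Contains G (SimpleGraph.pathGraph k) ∧
    ∀ u v : V, u ≠ v → ¬ G.Adj u v →
      Contains (addE G u v) K3 ∨ Contains (addE G u v) (SimpleGraph.pathGraph k)

/-- The saturation number `sat(n, {K₃, Pₖ})`. -/
noncomputable def satKPNum (n k : ℕ) : ℕ :=
  sInf {e | ∃ G : SimpleGraph (Fin n), SatKP G k ∧ G.edgeSet.ncard = e}

/-- Disjoint union of two graphs. -/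
def sumGraph {α β : Type*} (A : SimpleGraph α) (B : SimpleGraph β) :
    SimpleGraph (α ⊕ β) where
  Adj x y :=
    match x, y with
    | .inl a, .inl b => A.Adj a b
    | .inr a, .inr b => B.Adj a b
    | _, _ => False
  symm := by
    constructor
    rintro (a | a) (b | b) h
    · exact h.symm
    · exact h.elim
    · exact h.elim
    · exact h.symm
  loopless := by
    constructor
    rintro (a | a) h
    · exact A.loopless.irrefl a h
    · exact B.loopless.irrefl a h

/-- Disjoint union of a family of graphs. -/
def sigmaGraph {ι : Type*} {V : ι → Type*} (G : ∀ i, SimpleGraph (V i)) :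
    SimpleGraph (Σ i, V i) where
  Adj x y := ∃ (i : ι) (a b : V i), x = ⟨i, a⟩ ∧ y = ⟨i, b⟩ ∧ (G i).Adj a b
  symm := by
    constructor
    rintro x y ⟨i, a, b, rfl, rfl, h⟩
    exact ⟨i, b, a, rfl, rfl, h.symm⟩
  loopless := by
    constructor
    rintro ⟨j, c⟩ ⟨i, a, b, h1, h2, h⟩
    rw [h1] at h2
    obtain ⟨rfl⟩ := h2
    exact (G i).loopless.irrefl a h

/-!
Deleting a universal vertex `w` from a host graph and a universal vertex `v⋆` from a pattern
graph preserves containment in both directions: a copy of `F' - v⋆` in `G - w` extends to a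
copy of `F'` by sending `v⋆` to `w`, and a copy of `F'` in `G` yields one of `F' - v⋆` in `G - w`
after rerouting the vertex that lands on `w` to the image of `v⋆`, which is adjacent to the image
of every other vertex. Adding a non-edge keeps `w` universal, and the non-edges of `G` are exactly
those of `G - w`, so the two saturation conditions match.
-/

namespace SimpleGraph

variable {α : Type*}

lemma IsUniversal.mono {G H : SimpleGraph α} {w : α} (hGH : G ≤ H) (hw : G.IsUniversal w) :
    H.IsUniversal w :=
  fun _ ha => hGH (hw ha)

lemma IsUniversal.ne_left_of_not_adj {G : SimpleGraph α} {w u v : α} (hw : G.IsUniversal w)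
    (huv : u ≠ v) (hadj : ¬ G.Adj u v) : u ≠ w := by
  rintro rfl
  exact hadj (hw huv)

lemma IsUniversal.ne_right_of_not_adj {G : SimpleGraph α} {w u v : α} (hw : G.IsUniversal w)
    (huv : u ≠ v) (hadj : ¬ G.Adj u v) : v ≠ w :=
  hw.ne_left_of_not_adj huv.symm fun h => hadj h.symm

lemma le_addE (G : SimpleGraph α) (u v : α) : G ≤ addE G u v :=
  le_sup_left

lemma induce_addE (G : SimpleGraph α) (s : Set α) (u v : s) :
    (addE G u v).induce s = addE (G.induce s) u v := by
  ext x y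
  simp only [addE, comap_adj, sup_adj, fromEdgeSet_adj, Set.mem_singleton_iff, Sym2.eq,
    Sym2.rel_iff', Prod.mk.injEq, Prod.swap_prod_mk, ne_eq, Subtype.ext_iff]
  tauto

end SimpleGraph

section Contains

variable {α β : Type*} {F' : SimpleGraph β} {H : SimpleGraph α} {vstar : β} {w : α}

lemma Contains.of_induce_ne_universal (hw : H.IsUniversal w)
    (h : Contains (H.induce {a | a ≠ w}) (F'.induce {b | b ≠ vstar})) : Contains H F' := by
  classical
  obtain ⟨f, hf⟩ := h
  let g : β → α := fun b => if hb : b = vstar then w else f ⟨b, hb⟩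
  refine ⟨⟨g, fun b₁ b₂ h => ?_⟩, fun b₁ b₂ hadj => ?_⟩
  · simp only [g] at h
    split_ifs at h with h₁ h₂ h₂
    · exact h₁.trans h₂.symm
    · exact absurd h.symm (f ⟨b₂, h₂⟩).2
    · exact absurd h (f ⟨b₁, h₁⟩).2
    · exact congrArg Subtype.val (f.injective (Subtype.ext h))
  · change H.Adj (g b₁) (g b₂)
    simp only [g]
    split_ifs with h₁ h₂ h₂
    · exact absurd (h₁.trans h₂.symm) hadj.ne
    · exact hw (f ⟨b₂, h₂⟩).2.symm
    · exact (hw (f ⟨b₁, h₁⟩).2.symm).symm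
    · exact hf ⟨b₁, h₁⟩ ⟨b₂, h₂⟩ hadj

lemma Contains.induce_ne_of_universal (hv : F'.IsUniversal vstar) (h : Contains H F') :
    Contains (H.induce {a | a ≠ w}) (F'.induce {b | b ≠ vstar}) := by
  classical
  obtain ⟨f, hf⟩ := h
  have hvstar : ∀ b : {b | b ≠ vstar}, f b = w → f vstar ≠ w :=
    fun b hb hv' => b.2 (f.injective (hv'.trans hb.symm)).symm
  let g : {b | b ≠ vstar} → {a | a ≠ w} :=
    fun b => if hb : f b = w then ⟨f vstar, hvstar b hb⟩ else ⟨f b, hb⟩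
  refine ⟨⟨g, fun b₁ b₂ h => ?_⟩, fun b₁ b₂ hadj => ?_⟩
  · simp only [g] at h
    split_ifs at h with h₁ h₂ h₂ <;> rw [Subtype.mk.injEq] at h
    · exact Subtype.ext (f.injective (h₁.trans h₂.symm))
    · exact absurd (f.injective h).symm b₂.2
    · exact absurd (f.injective h) b₁.2
    · exact Subtype.ext (f.injective h)
  · change H.Adj (g b₁) (g b₂)
    simp only [g]
    split_ifs with h₁ h₂ h₂
    · exact absurd (f.injective (h₁.trans h₂.symm)) (Subtype.coe_injective.ne hadj.ne)
    · exact hf vstar b₂ (hv (Ne.symm b₂.2))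
    · exact (hf vstar b₁ (hv (Ne.symm b₁.2))).symm
    · exact hf b₁ b₂ hadj

lemma contains_induce_ne_iff (hv : F'.IsUniversal vstar) (hw : H.IsUniversal w) :
    Contains (H.induce {a | a ≠ w}) (F'.induce {b | b ≠ vstar}) ↔ Contains H F' :=
  ⟨.of_induce_ne_universal hw, .induce_ne_of_universal hv⟩

end Contains

theorem statement_4_general {α β : Type*}
    (F' : SimpleGraph β) (vstar : β) (hv : ∀ b, b ≠ vstar → F'.Adj vstar b)
    (G : SimpleGraph α) (w : α) (hw : ∀ a, a ≠ w → G.Adj w a) :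
    Saturated G F' ↔
      Saturated (SimpleGraph.induce {a | a ≠ w} G)
        (SimpleGraph.induce {b | b ≠ vstar} F') := by
  have hv : F'.IsUniversal vstar := fun b hb => hv b (Ne.symm hb)
  have hw : G.IsUniversal w := fun a ha => hw a (Ne.symm ha)
  have hcopy (H : SimpleGraph α) (hGH : G ≤ H) :
      Contains (H.induce {a | a ≠ w}) (F'.induce {b | b ≠ vstar}) ↔ Contains H F' :=
    contains_induce_ne_iff hv (hw.mono hGH)
  rw [Saturated, Saturated, hcopy G le_rfl]
  refine and_congr_right' ⟨fun hsat u v huv hadj => ?_, fun hsat u v huv hadj => ?_⟩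
  · rw [← induce_addE, hcopy _ (le_addE G u v)]
    exact hsat u v (Subtype.coe_injective.ne huv) hadj
  · have hsat' := hsat ⟨u, hw.ne_left_of_not_adj huv hadj⟩ ⟨v, hw.ne_right_of_not_adj huv hadj⟩
      (Subtype.coe_injective.ne_iff.mp huv) hadj
    rwa [← induce_addE, hcopy _ (le_addE G u v)] at hsat'

theorem statement_4 {α β : Type*} [Fintype α] [Fintype β]
    (F' : SimpleGraph β) (vstar : β) (hv : ∀ b, b ≠ vstar → F'.Adj vstar b)
    (G : SimpleGraph α) (w : α) (hw : ∀ a, a ≠ w → G.Adj w a) :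
    Saturated G F' ↔
      Saturated (SimpleGraph.induce {a | a ≠ w} G)
        (SimpleGraph.induce {b | b ≠ vstar} F') :=
  statement_4_general F' vstar hv G w hw
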